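/- (Hedberg-type inequality) Let 0 < β < α < mn, 0 < p₀ < n/α, and let f⃗ = (f₁,…,f_m) satisfy ‖f⃗‖_{M^{P⃗,p₀}} = 1. Then for every x ∈ ℝⁿ, |I_α^D(f⃗)(x)| ≲ M_β^D(f⃗)(x)^{(n−αp₀)/(n−βp₀)}. -/

import Mathlib

open MeasureTheory ENNReal

noncomputable section

variable {n : ℕ}

/-- Axis-parallel cube with lower corner `a` and side length `r` (half-open). -/
def cube (a : Fin n → ℝ) (r : ℝ) : Set (Fin n → ℝ) :=
  {y | ∀ i, a i ≤ y i ∧ y i < a i + r}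

/-- The dyadic cube `2^{-k}(m + [0,1)^n)`. -/
def dyadicCube (k : ℤ) (mv : Fin n → ℤ) : Set (Fin n → ℝ) :=
  cube (fun i => (mv i : ℝ) * (2 : ℝ) ^ (-k)) ((2 : ℝ) ^ (-k))

/-- The concentric triple `3Q` of the cube with corner `a` and side `r`. -/
def tripleCube (a : Fin n → ℝ) (r : ℝ) : Set (Fin n → ℝ) :=
  cube (fun i => a i - r) (3 * r)

/-- The Morrey norm `‖f‖_{M^{p,p₀}}`. -/
def morreyNorm (p p0 : ℝ) (f : (Fin n → ℝ) → ℝ) : ℝ≥0∞ :=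
  ⨆ (a : Fin n → ℝ) (r : ℝ) (_ : 0 < r),
    volume (cube a r) ^ (1 / p0 - 1 / p) *
      (∫⁻ x in cube a r, ENNReal.ofReal |f x| ^ p) ^ (1 / p)

/-- The product Morrey norm `‖f⃗‖_{M^{P⃗,p₀}}`. -/
def prodMorreyNorm {m : ℕ} (P : Fin m → ℝ) (p p0 : ℝ)
    (f : Fin m → (Fin n → ℝ) → ℝ) : ℝ≥0∞ :=
  ⨆ (a : Fin n → ℝ) (r : ℝ) (_ : 0 < r),
    volume (cube a r) ^ (1 / p0 - 1 / p) *
      ∏ j, (∫⁻ x in cube a r, ENNReal.ofReal |f j x| ^ P j) ^ (1 / P j)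

/-- The Radon–Morrey norm `‖g‖_{M_μ^{q,q₀}}`. -/
def radonMorreyNorm (μ : Measure (Fin n → ℝ)) (q q0 : ℝ)
    (g : (Fin n → ℝ) → ℝ≥0∞) : ℝ≥0∞ :=
  ⨆ (a : Fin n → ℝ) (r : ℝ) (_ : 0 < r),
    volume (cube a r) ^ (1 / q0 - 1 / q) * (∫⁻ x in cube a r, g x ^ q ∂μ) ^ (1 / q)

/-- The growth norm `‖μ‖_β := sup_Q μ(Q)/ℓ_Q^β`. -/
def measureGrowthNorm (μ : Measure (Fin n → ℝ)) (β : ℝ) : ℝ≥0∞ :=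
  ⨆ (a : Fin n → ℝ) (r : ℝ) (_ : 0 < r), μ (cube a r) / ENNReal.ofReal r ^ β

/-- The `m`-sublinear fractional maximal operator `𝔐_α`. -/
def fracMaximal {m : ℕ} (α : ℝ) (f : Fin m → (Fin n → ℝ) → ℝ)
    (x : Fin n → ℝ) : ℝ≥0∞ :=
  ⨆ (a : Fin n → ℝ) (r : ℝ) (_ : 0 < r) (_ : x ∈ cube a r),
    ENNReal.ofReal r ^ (α - (m : ℝ) * n) *
      ∏ j, ∫⁻ y in cube a r, ENNReal.ofReal |f j y|

/-- The dyadic `m`-sublinear fractional maximal operator `𝔐_α^𝒟`. -/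
def dyadicFracMaximal {m : ℕ} (α : ℝ) (f : Fin m → (Fin n → ℝ) → ℝ)
    (x : Fin n → ℝ) : ℝ≥0∞ :=
  ⨆ (k : ℤ) (mv : Fin n → ℤ) (_ : x ∈ dyadicCube k mv),
    ENNReal.ofReal ((2 : ℝ) ^ (-k)) ^ (α - (m : ℝ) * n) *
      ∏ j, ∫⁻ y in dyadicCube k mv, ENNReal.ofReal |f j y|

/-- The dyadic `m`-linear fractional integral operator `ℑ_α^𝒟`. -/
def dyadicFracIntegral {m : ℕ} (α : ℝ) (f : Fin m → (Fin n → ℝ) → ℝ)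
    (x : Fin n → ℝ) : ℝ≥0∞ :=
  ∑' qk : ℤ × (Fin n → ℤ),
    (dyadicCube qk.1 qk.2).indicator
      (fun _ => ENNReal.ofReal ((2 : ℝ) ^ (-qk.1)) ^ (α - (m : ℝ) * n) *
        ∏ j, ∫⁻ y in dyadicCube qk.1 qk.2, ENNReal.ofReal |f j y|) x

/-- The `m`-linear fractional integral operator `ℑ_α` (with Euclidean distances). -/
def fracIntegral {m : ℕ} (α : ℝ) (f : Fin m → (Fin n → ℝ) → ℝ)
    (x : Fin n → ℝ) : ℝ≥0∞ :=
  ∫⁻ y : Fin m → Fin n → ℝ,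
    (∏ j, ENNReal.ofReal |f j (y j)|) /
      ENNReal.ofReal ((∑ j, Real.sqrt (∑ i, (x i - y j i) ^ 2)) ^ ((m : ℝ) * n - α))


/-!
Fix `x`. In each generation `k` exactly one dyadic cube `Q` of side `2^{-k}` contains `x`, so
`I_α^D f(x) = ∑_k T_k` with `T_k = ℓ_Q^{α-mn} ∏_j ∫_Q |f_j|`. On the one hand
`T_k ≤ 2^{-k(α-β)} M_β^D f(x)`; on the other, Hölder's inequality on `Q` and the normalisation of
the Morrey norm give `T_k ≤ 2^{k(n/p₀-α)}`. Using the first bound for small cubes and the second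
for large ones, with the threshold where the two bounds meet, both halves are geometric series
of size `≲ M_β^D f(x)^θ` with `θ = (n/p₀-α)/(n/p₀-β) = (n-αp₀)/(n-βp₀)`.
-/

lemma ENNReal.lintegral_le_lintegral_rpow_mul_measure_univ {X : Type*} [MeasurableSpace X]
    (μ : Measure X) (h : X → ℝ≥0∞) {P : ℝ} (hP : 1 < P) :
    ∫⁻ y, h y ∂μ ≤ (∫⁻ y, h y ^ P ∂μ) ^ (1 / P) * μ Set.univ ^ (1 - 1 / P) := by
  -- `h` need not be measurable: pass to a measurable minorant with the same integral
  obtain ⟨g, hgm, hgh, hg⟩ := exists_measurable_le_lintegral_eq μ h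
  have hPQ := Real.HolderConjugate.conjExponent hP
  have holder := ENNReal.lintegral_mul_le_Lp_mul_Lq μ hPQ hgm.aemeasurable
    (aemeasurable_const (b := (1 : ℝ≥0∞)))
  simp only [Pi.mul_apply, mul_one, ENNReal.one_rpow, lintegral_const, one_mul] at holder
  rw [one_div P.conjExponent, ← hPQ.one_sub_inv, ← one_div] at holder
  rw [hg]
  refine holder.trans (mul_le_mul_left (ENNReal.rpow_le_rpow ?_ (by positivity)) _)
  exact lintegral_mono fun y => ENNReal.rpow_le_rpow (hgh y) (zero_le_one.trans hP.le)

lemma ENNReal.rpow_sum {x : ℝ≥0∞} (hx₀ : x ≠ 0) (hx : x ≠ ∞) {ι : Type*} (s : Finset ι)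
    (c : ι → ℝ) : x ^ (∑ i ∈ s, c i) = ∏ i ∈ s, x ^ c i := by
  induction s using Finset.cons_induction with
  | empty => simp
  | cons a s ha ih => rw [Finset.sum_cons, Finset.prod_cons, ENNReal.rpow_add _ _ hx₀ hx, ih]

lemma volume_cube (a : Fin n → ℝ) (r : ℝ) : volume (cube a r) = ENNReal.ofReal r ^ n := by
  have : cube a r = Set.univ.pi fun i => Set.Ico (a i) (a i + r) := by
    ext y; simp [cube]
  simp [this, volume_pi_pi, Real.volume_Ico]

lemma prod_lintegral_cube_le_prodMorreyNorm {m : ℕ} {P : Fin m → ℝ} {p : ℝ} (hP : ∀ j, 1 < P j)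
    (hp : 1 / p = ∑ j, 1 / P j) (p0 : ℝ) (f : Fin m → (Fin n → ℝ) → ℝ) (a : Fin n → ℝ)
    {r : ℝ} (hr : 0 < r) :
    ∏ j, ∫⁻ y in cube a r, ENNReal.ofReal |f j y| ≤
      prodMorreyNorm P p p0 f * volume (cube a r) ^ ((m : ℝ) - 1 / p0) := by
  set V := volume (cube a r)
  have hV₀ : V ≠ 0 := by simp [V, volume_cube, hr]
  have hV : V ≠ ∞ := by simp [V, volume_cube]
  set A : Fin m → ℝ≥0∞ := fun j => (∫⁻ y in cube a r, ENNReal.ofReal |f j y| ^ P j) ^ (1 / P j)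
  have hmorrey : V ^ (1 / p0 - 1 / p) * ∏ j, A j ≤ prodMorreyNorm P p p0 f :=
    le_iSup₂_of_le a r (le_iSup_of_le hr le_rfl)
  have hexp : ∑ j, (1 - 1 / P j) = (1 / p0 - 1 / p) + ((m : ℝ) - 1 / p0) := by
    rw [Finset.sum_sub_distrib, ← hp]; simp
  calc ∏ j, ∫⁻ y in cube a r, ENNReal.ofReal |f j y|
      ≤ ∏ j, A j * V ^ (1 - 1 / P j) := Finset.prod_le_prod' fun j _ => by
        have := ENNReal.lintegral_le_lintegral_rpow_mul_measure_univ
          (volume.restrict (cube a r)) (fun y => ENNReal.ofReal |f j y|) (hP j)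
        rwa [Measure.restrict_apply_univ] at this
    _ = (V ^ (1 / p0 - 1 / p) * ∏ j, A j) * V ^ ((m : ℝ) - 1 / p0) := by
        rw [Finset.prod_mul_distrib, ← ENNReal.rpow_sum hV₀ hV, hexp,
          ENNReal.rpow_add _ _ hV₀ hV]
        ring
    _ ≤ prodMorreyNorm P p p0 f * V ^ ((m : ℝ) - 1 / p0) := mul_le_mul_left hmorrey _

def dyadicIndex (k : ℤ) (x : Fin n → ℝ) : Fin n → ℤ := fun i => ⌊x i * (2 : ℝ) ^ k⌋

lemma mem_dyadicCube_iff {k : ℤ} {mv : Fin n → ℤ} {x : Fin n → ℝ} :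
    x ∈ dyadicCube k mv ↔ mv = dyadicIndex k x := by
  have hk : (0 : ℝ) < (2 : ℝ) ^ k := by positivity
  simp only [dyadicCube, cube, Set.mem_ofPred_eq, funext_iff, dyadicIndex, eq_comm (a := mv _),
    Int.floor_eq_iff, zpow_neg, ← div_eq_mul_inv]
  refine forall_congr' fun i => and_congr ?_ ?_
  · exact div_le_iff₀ hk
  · rw [← one_div, ← add_div, lt_div_iff₀ hk]

lemma mem_dyadicCube_dyadicIndex (k : ℤ) (x : Fin n → ℝ) : x ∈ dyadicCube k (dyadicIndex k x) :=
  mem_dyadicCube_iff.2 rfl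

def dyadicSummand {m : ℕ} (α : ℝ) (f : Fin m → (Fin n → ℝ) → ℝ) (k : ℤ) (mv : Fin n → ℤ) : ℝ≥0∞ :=
  ENNReal.ofReal ((2 : ℝ) ^ (-k)) ^ (α - (m : ℝ) * n) *
    ∏ j, ∫⁻ y in dyadicCube k mv, ENNReal.ofReal |f j y|

lemma dyadicFracIntegral_eq_tsum {m : ℕ} (α : ℝ) (f : Fin m → (Fin n → ℝ) → ℝ) (x : Fin n → ℝ) :
    dyadicFracIntegral α f x = ∑' k : ℤ, dyadicSummand α f k (dyadicIndex k x) := by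
  rw [dyadicFracIntegral, ENNReal.tsum_prod']
  refine tsum_congr fun k => ?_
  rw [tsum_eq_single (dyadicIndex k x) fun mv hmv => Set.indicator_of_notMem
    (fun hx => hmv (mem_dyadicCube_iff.1 hx)) _]
  exact Set.indicator_of_mem (mem_dyadicCube_dyadicIndex k x) _

lemma dyadicSummand_le_dyadicFracMaximal {m : ℕ} (β : ℝ) (f : Fin m → (Fin n → ℝ) → ℝ)
    {x : Fin n → ℝ} {k : ℤ} {mv : Fin n → ℤ} (hx : x ∈ dyadicCube k mv) :
    dyadicSummand β f k mv ≤ dyadicFracMaximal β f x :=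
  le_iSup₂_of_le k mv (le_iSup_of_le hx le_rfl)

lemma ofReal_two_zpow_neg_rpow (k : ℤ) (c : ℝ) :
    ENNReal.ofReal ((2 : ℝ) ^ (-k)) ^ c = (2 : ℝ≥0∞) ^ (-(k : ℝ) * c) := by
  rw [ENNReal.ofReal_rpow_of_pos (by positivity), ← Real.rpow_intCast, ← Real.rpow_mul two_pos.le,
    ← ENNReal.ofReal_rpow_of_pos two_pos, ENNReal.ofReal_ofNat, Int.cast_neg]

lemma tsum_two_rpow_sub_mul (a c : ℝ) :
    ∑' j : ℕ, (2 : ℝ≥0∞) ^ (c - j * a) = 2 ^ c * (1 - 2 ^ (-a))⁻¹ := by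
  have hterm : ∀ j : ℕ, (2 : ℝ≥0∞) ^ (c - j * a) = 2 ^ c * (2 ^ (-a)) ^ j := fun j => by
    rw [sub_eq_add_neg, ENNReal.rpow_add _ _ two_ne_zero ENNReal.ofNat_ne_top,
      ← ENNReal.rpow_natCast, ← ENNReal.rpow_mul]
    ring_nf
  simp only [hterm, ENNReal.tsum_mul_left, ENNReal.tsum_geometric]

lemma inv_one_sub_two_rpow_neg_lt_top {a : ℝ} (ha : 0 < a) : (1 - (2 : ℝ≥0∞) ^ (-a))⁻¹ < ∞ :=
  ENNReal.inv_lt_top.2 <| tsub_pos_of_lt <|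
    ENNReal.rpow_lt_one_of_one_lt_of_neg one_lt_two (neg_neg_of_pos ha)

lemma tsum_le_of_le_two_rpow_min {a b : ℝ} (ha : 0 < a) (hb : 0 < b) (s : ℝ) {T : ℤ → ℝ≥0∞}
    (h₁ : ∀ k : ℤ, T k ≤ 2 ^ (s - k * a)) (h₂ : ∀ k : ℤ, T k ≤ 2 ^ ((k : ℝ) * b)) :
    ∑' k, T k ≤ ((1 - 2 ^ (-a))⁻¹ + (1 - 2 ^ (-b))⁻¹) * 2 ^ (s * (b / (a + b))) := by
  -- split the sum at the generation `K` where the two bounds cross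
  set K : ℤ := ⌊s / (a + b)⌋ + 1
  have hK₁ : s / (a + b) ≤ K := by push_cast [K]; linarith [Int.lt_floor_add_one (s / (a + b))]
  have hK₂ : (K : ℝ) - 1 ≤ s / (a + b) := by push_cast [K]; linarith [Int.floor_le (s / (a + b))]
  calc ∑' k, T k = ∑' j : ℕ, T (j + K) + ∑' j : ℕ, T (-(j + 1) + K) := by
        rw [← (Equiv.addRight K).tsum_eq, ← tsum_nat_add_neg_add_one ENNReal.summable,
          ENNReal.tsum_add]
        rfl
    _ ≤ ∑' j : ℕ, (2 : ℝ≥0∞) ^ ((s - K * a) - j * a) + ∑' j : ℕ, 2 ^ ((K - 1) * b - j * b) := by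
        gcongr with j j
        · exact (h₁ _).trans_eq (by push_cast; ring_nf)
        · exact (h₂ _).trans_eq (by push_cast; ring_nf)
    _ = 2 ^ (s - K * a) * (1 - 2 ^ (-a))⁻¹ + 2 ^ ((K - 1) * b) * (1 - 2 ^ (-b))⁻¹ := by
        rw [tsum_two_rpow_sub_mul, tsum_two_rpow_sub_mul]
    _ ≤ 2 ^ (s * (b / (a + b))) * (1 - 2 ^ (-a))⁻¹ +
          2 ^ (s * (b / (a + b))) * (1 - 2 ^ (-b))⁻¹ := by
        gcongr ?_ * _ + ?_ * _ <;> refine ENNReal.rpow_le_rpow_of_exponent_le one_le_two ?_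
        · rw [show s * (b / (a + b)) = s - s / (a + b) * a by field_simp; ring]
          linarith [mul_le_mul_of_nonneg_right hK₁ ha.le]
        · rw [show s * (b / (a + b)) = s / (a + b) * b by ring]
          exact mul_le_mul_of_nonneg_right hK₂ hb.le
    _ = ((1 - 2 ^ (-a))⁻¹ + (1 - 2 ^ (-b))⁻¹) * 2 ^ (s * (b / (a + b))) := by ring

lemma tsum_le_of_le_min {a b : ℝ} (ha : 0 < a) (hb : 0 < b) (M : ℝ≥0∞) {T : ℤ → ℝ≥0∞}
    (h₁ : ∀ k : ℤ, T k ≤ 2 ^ (-(k : ℝ) * a) * M) (h₂ : ∀ k : ℤ, T k ≤ 2 ^ ((k : ℝ) * b)) :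
    ∑' k, T k ≤ ((1 - 2 ^ (-a))⁻¹ + (1 - 2 ^ (-b))⁻¹) * M ^ (b / (a + b)) := by
  rcases eq_or_ne M 0 with rfl | hM₀
  · simp_all
  rcases eq_or_ne M ∞ with rfl | hM
  · have hC : ((1 : ℝ≥0∞) - 2 ^ (-a))⁻¹ + (1 - 2 ^ (-b))⁻¹ ≠ 0 := by simp
    rw [ENNReal.top_rpow_of_pos (by positivity), ENNReal.mul_top hC]
    exact le_top
  obtain ⟨s, rfl⟩ : ∃ s : ℝ, M = 2 ^ s := ⟨Real.logb 2 M.toReal, by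
    rw [← ENNReal.ofReal_ofNat 2, ENNReal.ofReal_rpow_of_pos two_pos,
      Real.rpow_logb two_pos one_lt_two.ne' (ENNReal.toReal_pos hM₀ hM), ENNReal.ofReal_toReal hM]⟩
  rw [← ENNReal.rpow_mul]
  refine tsum_le_of_le_two_rpow_min ha hb _ (fun k => (h₁ k).trans_eq ?_) h₂
  rw [← ENNReal.rpow_add _ _ two_ne_zero ENNReal.ofNat_ne_top]
  ring_nf

lemma dyadicSummand_le_two_rpow_mul_dyadicFracMaximal {m : ℕ} (α β : ℝ)
    (f : Fin m → (Fin n → ℝ) → ℝ) {x : Fin n → ℝ} {k : ℤ} {mv : Fin n → ℤ}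
    (hx : x ∈ dyadicCube k mv) :
    dyadicSummand α f k mv ≤ 2 ^ (-(k : ℝ) * (α - β)) * dyadicFracMaximal β f x :=
  calc dyadicSummand α f k mv = 2 ^ (-(k : ℝ) * (α - β)) * dyadicSummand β f k mv := by
        rw [dyadicSummand, dyadicSummand, ofReal_two_zpow_neg_rpow, ofReal_two_zpow_neg_rpow,
          ← mul_assoc, ← ENNReal.rpow_add _ _ two_ne_zero ENNReal.ofNat_ne_top]
        ring_nf
    _ ≤ _ := by gcongr; exact dyadicSummand_le_dyadicFracMaximal β f hx

lemma dyadicSummand_le_two_rpow_of_prodMorreyNorm_le_one {m : ℕ} {P : Fin m → ℝ} {p : ℝ}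
    (hP : ∀ j, 1 < P j) (hp : 1 / p = ∑ j, 1 / P j) {p0 : ℝ} (α : ℝ)
    {f : Fin m → (Fin n → ℝ) → ℝ} (hf : prodMorreyNorm P p p0 f ≤ 1) (k : ℤ) (mv : Fin n → ℤ) :
    dyadicSummand α f k mv ≤ 2 ^ ((k : ℝ) * (n / p0 - α)) :=
  calc dyadicSummand α f k mv
      ≤ ENNReal.ofReal ((2 : ℝ) ^ (-k)) ^ (α - (m : ℝ) * n) *
          volume (dyadicCube k mv) ^ ((m : ℝ) - 1 / p0) := by
        refine mul_le_mul_right ((prod_lintegral_cube_le_prodMorreyNorm hP hp p0 f _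
          (by positivity)).trans ?_) _
        exact mul_le_of_le_one_left zero_le hf
    _ = 2 ^ ((k : ℝ) * (n / p0 - α)) := by
        rw [dyadicCube, volume_cube, ← ENNReal.rpow_natCast, ← ENNReal.rpow_mul,
          ofReal_two_zpow_neg_rpow, ofReal_two_zpow_neg_rpow,
          ← ENNReal.rpow_add _ _ two_ne_zero ENNReal.ofNat_ne_top]
        ring_nf

theorem statement7_general (m : ℕ)
    (P : Fin m → ℝ) (hP : ∀ j, 1 < P j) (p p0 α β : ℝ)
    (hp : 1 / p = ∑ j, 1 / P j)
    (hβ : 0 < β) (hβα : β < α)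
    (hp0 : 0 < p0) (hp0n : p0 < n / α) :
    ∃ C : ℝ≥0∞, 0 < C ∧ C < ∞ ∧
      ∀ f : Fin m → (Fin n → ℝ) → ℝ, prodMorreyNorm P p p0 f = 1 →
        ∀ x : Fin n → ℝ,
          dyadicFracIntegral α f x ≤
            C * dyadicFracMaximal β f x ^ ((n - α * p0) / (n - β * p0)) := by
  have hα : 0 < α := hβ.trans hβα
  have hαβ : 0 < α - β := sub_pos.2 hβα
  have hαp0 : α * p0 < n := by rwa [lt_div_iff₀ hα, mul_comm] at hp0n
  have hb : 0 < n / p0 - α := by rw [sub_pos, lt_div_iff₀ hp0]; exact hαp0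
  have hθ : ((n : ℝ) - α * p0) / (n - β * p0) = (n / p0 - α) / ((α - β) + (n / p0 - α)) := by
    field_simp
    ring
  refine ⟨(1 - 2 ^ (-(α - β)))⁻¹ + (1 - 2 ^ (-(n / p0 - α)))⁻¹,
    one_pos.trans_le ((ENNReal.one_le_inv.2 tsub_le_self).trans le_self_add),
    ENNReal.add_lt_top.2 ⟨inv_one_sub_two_rpow_neg_lt_top hαβ, inv_one_sub_two_rpow_neg_lt_top hb⟩,
    fun f hf x => ?_⟩
  rw [dyadicFracIntegral_eq_tsum, hθ]
  exact tsum_le_of_le_min hαβ hb _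
    (fun k => dyadicSummand_le_two_rpow_mul_dyadicFracMaximal α β f
      (mem_dyadicCube_dyadicIndex k x))
    (fun k => dyadicSummand_le_two_rpow_of_prodMorreyNorm_le_one hP hp α hf.le k _)

theorem statement7 (hn : 0 < n) (m : ℕ) (hm : 0 < m)
    (P : Fin m → ℝ) (hP : ∀ j, 1 < P j) (p p0 α β : ℝ)
    (hp : 1 / p = ∑ j, 1 / P j)
    (hβ : 0 < β) (hβα : β < α) (hα : α < (m : ℝ) * n)
    (hp0 : 0 < p0) (hp0n : p0 < n / α) :
    ∃ C : ℝ≥0∞, 0 < C ∧ C < ∞ ∧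
      ∀ f : Fin m → (Fin n → ℝ) → ℝ, prodMorreyNorm P p p0 f = 1 →
        ∀ x : Fin n → ℝ,
          dyadicFracIntegral α f x ≤
            C * dyadicFracMaximal β f x ^ ((n - α * p0) / (n - β * p0)) :=
  statement7_general m P hP p p0 α β hp hβ hβα hp0 hp0n
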